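/- Let k be a field and A, B, C be n×n matrices over k. Then the following are equivalent: (i) for all n×n matrices X, Y, Z one has Tr(X·[B,C]) + Tr(A·[Y,C] + A·[B,Z]) = 0; (ii) [A,B] = [B,C] = [C,A] = 0. -/

import Mathlib

/-!
Since `Tr` is cyclic, the trilinear form `Tr A[B,C]` is invariant under cyclic permutations of
`(A, B, C)`, so its derivative at `(A, B, C)` in the direction `(X, Y, Z)` is
`Tr X[B,C] + Tr Y[C,A] + Tr Z[A,B]`. It vanishes for all directions exactly when the three
commutators do, because the trace pairing `(X, M) ↦ Tr XM` is nondegenerate.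
-/

namespace Matrix

variable {ι R : Type*} [Fintype ι] [CommRing R]

theorem trace_mul_commutator_cycle (A B C : Matrix ι ι R) :
    trace (A * (B * C - C * B)) = trace (B * (C * A - A * C)) := by
  simp only [Matrix.mul_sub, trace_sub, ← Matrix.mul_assoc]
  rw [trace_mul_cycle A C B, trace_mul_cycle B C A]

theorem eq_zero_iff_forall_trace_mul_eq_zero {M : Matrix ι ι R} :
    M = 0 ↔ ∀ X : Matrix ι ι R, trace (X * M) = 0 := by
  simpa using ext_iff_trace_mul_left (A := M) (B := 0)

end Matrix

open Matrix

/-- `(A,B,C)` is a critical point of `Tr A[B,C]` iff `A`, `B`, `C` pairwise commute. -/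
theorem stmt_4 (k : Type*) [Field k] (n : ℕ)
    (A B C : Matrix (Fin n) (Fin n) k) :
    (∀ X Y Z : Matrix (Fin n) (Fin n) k,
        (X * (B * C - C * B)).trace +
          (A * (Y * C - C * Y) + A * (B * Z - Z * B)).trace = 0) ↔
      (A * B - B * A = 0 ∧ B * C - C * B = 0 ∧ C * A - A * C = 0) := by
  have derivative_eq : ∀ X Y Z : Matrix (Fin n) (Fin n) k,
      (X * (B * C - C * B)).trace + (A * (Y * C - C * Y) + A * (B * Z - Z * B)).trace =
        (X * (B * C - C * B)).trace + (Y * (C * A - A * C)).trace +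
          (Z * (A * B - B * A)).trace := by
    intro X Y Z
    rw [trace_add, trace_mul_commutator_cycle A Y C, trace_mul_commutator_cycle A B Z,
      trace_mul_commutator_cycle B Z A, add_assoc]
  simp only [derivative_eq]
  constructor
  · intro h
    refine ⟨?_, ?_, ?_⟩ <;> rw [eq_zero_iff_forall_trace_mul_eq_zero]
    · exact fun Z ↦ by simpa using h 0 0 Z
    · exact fun X ↦ by simpa using h X 0 0
    · exact fun Y ↦ by simpa using h 0 Y 0
  · rintro ⟨hAB, hBC, hCA⟩ X Y Z
    simp [hAB, hBC, hCA]
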